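/- arXiv:1808.05117 — 5 statements merged into one kernel-verified Lean document; each statement's English description precedes it below -/
import Mathlib

section
/- Let ε > 0 and K > 0 be real numbers and let N₀ satisfy 0 < N₀ < K. If N : ℝ → ℝ is differentiable with N(0) = N₀ and satisfies the logistic equation N'(t) = ε · N(t) · (1 − N(t)/K) for all t ≥ 0, then 0 < N(t) < K for all t ≥ 0. (The logistic law imposes a limiting value K on the population.) -/
/-!
The equilibria `0` and `K` of the logistic equation are constant solutions, and uniqueness of
solutions prevents a trajectory from reaching either of them in finite time. Along a given
solution the equation is linear: `N' = c(t) N` with `c = ε (1 - N/K)`, and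
`(N - K)' = c(t) (N - K)` with `c = -ε N / K`, so the uniqueness theorem applies with a
globally Lipschitz right-hand side. If `N` left `(0, K)`, the intermediate value theorem would
give a time at which it equals `0` or `K`, and running the equation backwards would force
`N₀ = 0` or `N₀ = K`.
-/

open Set

theorem eqOn_zero_of_hasDerivAt_smul_self_of_eq_zero_right {E : Type*} [NormedAddCommGroup E]
    [NormedSpace ℝ E] {c : ℝ → ℝ} {g : ℝ → E} {a b : ℝ} (hc : ContinuousOn c (Icc a b))
    (hg : ∀ t ∈ Icc a b, HasDerivAt g (c t • g t) t) (hb : g b = 0) :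
    EqOn g 0 (Icc a b) := by
  obtain ⟨C, hC⟩ := (isCompact_Icc.image_of_continuousOn hc.nnnorm).bddAbove
  have hlip : ∀ t ∈ Ioc a b, LipschitzOnWith C (c t • · : E → E) univ := fun t ht ↦
    ((lipschitzWith_smul (c t)).weaken (hC ⟨t, Ioc_subset_Icc_self ht, rfl⟩)).lipschitzOnWith
  exact ODE_solution_unique_of_mem_Icc_left (g := fun _ ↦ 0) hlip
    (HasDerivAt.continuousOn hg)
    (fun t ht ↦ (hg t (Ioc_subset_Icc_self ht)).hasDerivWithinAt) (fun _ _ ↦ trivial)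
    continuousOn_const (fun t _ ↦ by simpa using hasDerivWithinAt_const t _ (0 : E))
    (fun _ _ ↦ trivial) hb

section Logistic

variable {ε K a b : ℝ} {N : ℝ → ℝ}

theorem logistic_eqOn_zero_of_eq_zero_right
    (hN : ∀ t ∈ Icc a b, HasDerivAt N (ε * N t * (1 - N t / K)) t) (hb : N b = 0) :
    EqOn N 0 (Icc a b) := by
  have hcont : ContinuousOn N (Icc a b) := HasDerivAt.continuousOn hN
  refine eqOn_zero_of_hasDerivAt_smul_self_of_eq_zero_right (c := fun t ↦ ε * (1 - N t / K))
    (by fun_prop) (fun t ht ↦ (hN t ht).congr_deriv ?_) hb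
  rw [smul_eq_mul]
  ring

theorem logistic_eqOn_const_of_eq_right (hK : K ≠ 0)
    (hN : ∀ t ∈ Icc a b, HasDerivAt N (ε * N t * (1 - N t / K)) t) (hb : N b = K) :
    EqOn N (fun _ ↦ K) (Icc a b) := by
  have hcont : ContinuousOn N (Icc a b) := HasDerivAt.continuousOn hN
  have hsub := eqOn_zero_of_hasDerivAt_smul_self_of_eq_zero_right (g := fun t ↦ N t - K)
    (c := fun t ↦ -(ε * N t / K)) (by fun_prop)
    (fun t ht ↦ ((hN t ht).sub_const K).congr_deriv ?_) (sub_eq_zero.2 hb)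
  · exact fun t ht ↦ sub_eq_zero.1 (hsub ht)
  · rw [smul_eq_mul]
    field_simp
    ring

end Logistic

theorem logistic_bounded_general (ε K N₀ : ℝ)
    (hN₀ : 0 < N₀) (hN₀K : N₀ < K) (N : ℝ → ℝ)
    (hode : ∀ t, 0 ≤ t → HasDerivAt N (ε * N t * (1 - N t / K)) t)
    (h0 : N 0 = N₀) :
    ∀ t, 0 ≤ t → 0 < N t ∧ N t < K := by
  intro t ht
  have hcont : ContinuousOn N (Icc 0 t) := HasDerivAt.continuousOn fun s hs ↦ hode s hs.1
  constructor
  · by_contra! hle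
    obtain ⟨s, hs, hNs⟩ := intermediate_value_Icc' ht hcont ⟨hle, h0 ▸ hN₀.le⟩
    have hN0 : N 0 = 0 :=
      logistic_eqOn_zero_of_eq_zero_right (fun u hu ↦ hode u hu.1) hNs (left_mem_Icc.2 hs.1)
    linarith
  · by_contra! hge
    obtain ⟨s, hs, hNs⟩ := intermediate_value_Icc ht hcont ⟨h0 ▸ hN₀K.le, hge⟩
    have hNK : N 0 = K := logistic_eqOn_const_of_eq_right (hN₀.trans hN₀K).ne'
      (fun u hu ↦ hode u hu.1) hNs (left_mem_Icc.2 hs.1)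
    linarith

/-- The logistic law imposes a limiting value K on the population: if
0 < N₀ < K and N is a differentiable solution of N' = ε·N·(1 − N/K) for t ≥ 0
with N(0) = N₀, then 0 < N(t) < K for all t ≥ 0. -/
theorem logistic_bounded (ε K N₀ : ℝ) (hε : 0 < ε) (hK : 0 < K)
    (hN₀ : 0 < N₀) (hN₀K : N₀ < K) (N : ℝ → ℝ) (hdiff : Differentiable ℝ N)
    (hode : ∀ t, 0 ≤ t → HasDerivAt N (ε * N t * (1 - N t / K)) t)
    (h0 : N 0 = N₀) :
    ∀ t, 0 ≤ t → 0 < N t ∧ N t < K :=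
  logistic_bounded_general ε K N₀ hN₀ hN₀K N hode h0
end

section
/- Let ε₁, ε₂, γ₁, γ₂ > 0 and let N₁, N₂ : ℝ → ℝ be differentiable positive functions satisfying the Volterra predator-prey system N₁' = N₁(ε₁ − γ₁ N₂), N₂' = −N₂(ε₂ − γ₂ N₁), and suppose the solution is periodic with period T > 0 (N₁(t+T) = N₁(t) and N₂(t+T) = N₂(t) for all t). Then the time average of the prey over one period equals the equilibrium value: (1/T) ∫₀ᵀ N₁(t) dt = ε₂/γ₂. -/
/-!
The predator equation says that `log N₂` has derivative `γ₂ N₁ - ε₂`. Integrating over one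
period, the left-hand side contributes `log N₂ T - log N₂ 0 = 0`, so `γ₂ ∫₀ᵀ N₁ = ε₂ T`.
-/

open intervalIntegral in
theorem integral_eq_zero_of_hasDerivAt_mul_of_eq {u g : ℝ → ℝ} {a b : ℝ}
    (hu : ∀ t ∈ Set.uIcc a b, u t ≠ 0)
    (hderiv : ∀ t ∈ Set.uIcc a b, HasDerivAt u (u t * g t) t)
    (hg : IntervalIntegrable g MeasureTheory.volume a b) (hab : u a = u b) :
    ∫ t in a..b, g t = 0 := by
  have hlog : ∀ t ∈ Set.uIcc a b, HasDerivAt (fun t => Real.log (u t)) (g t) t := fun t ht =>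
    ((hderiv t ht).log (hu t ht)).congr_deriv (by field_simp [hu t ht])
  rw [integral_eq_sub_of_hasDerivAt hlog hg, hab, sub_self]

theorem volterra_prey_average_general (ε₁ ε₂ γ₁ γ₂ T : ℝ)
    (hγ₂ : 0 < γ₂) (hT : 0 < T)
    (N₁ N₂ : ℝ → ℝ) (hpos₂ : ∀ t, 0 < N₂ t)
    (hode₁ : ∀ t, HasDerivAt N₁ (N₁ t * (ε₁ - γ₁ * N₂ t)) t)
    (hode₂ : ∀ t, HasDerivAt N₂ (-(N₂ t) * (ε₂ - γ₂ * N₁ t)) t)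
    (hper₂ : ∀ t, N₂ (t + T) = N₂ t) :
    (1 / T) * ∫ t in (0 : ℝ)..T, N₁ t = ε₂ / γ₂ := by
  have hN₁ : Continuous N₁ := continuous_iff_continuousAt.2 fun t => (hode₁ t).continuousAt
  have hrate : ∫ t in (0 : ℝ)..T, (γ₂ * N₁ t - ε₂) = 0 :=
    integral_eq_zero_of_hasDerivAt_mul_of_eq (g := fun t => γ₂ * N₁ t - ε₂)
      (fun t _ => (hpos₂ t).ne') (fun t _ => (hode₂ t).congr_deriv (by ring))
      (((continuous_const.mul hN₁).sub continuous_const).intervalIntegrable 0 T)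
      (by simpa using (hper₂ 0).symm)
  rw [intervalIntegral.integral_sub ((hN₁.intervalIntegrable 0 T).const_mul γ₂)
    intervalIntegrable_const, intervalIntegral.integral_const_mul,
    intervalIntegral.integral_const, smul_eq_mul, sub_zero] at hrate
  field_simp
  linarith

/-- The time average of the prey over one period of a periodic solution of the
Volterra predator-prey system equals the equilibrium value ε₂/γ₂. -/
theorem volterra_prey_average (ε₁ ε₂ γ₁ γ₂ T : ℝ)
    (hε₁ : 0 < ε₁) (hε₂ : 0 < ε₂) (hγ₁ : 0 < γ₁) (hγ₂ : 0 < γ₂) (hT : 0 < T)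
    (N₁ N₂ : ℝ → ℝ) (hpos₁ : ∀ t, 0 < N₁ t) (hpos₂ : ∀ t, 0 < N₂ t)
    (hode₁ : ∀ t, HasDerivAt N₁ (N₁ t * (ε₁ - γ₁ * N₂ t)) t)
    (hode₂ : ∀ t, HasDerivAt N₂ (-(N₂ t) * (ε₂ - γ₂ * N₁ t)) t)
    (hper₁ : ∀ t, N₁ (t + T) = N₁ t) (hper₂ : ∀ t, N₂ (t + T) = N₂ t) :
    (1 / T) * ∫ t in (0 : ℝ)..T, N₁ t = ε₂ / γ₂ :=
  volterra_prey_average_general ε₁ ε₂ γ₁ γ₂ T hγ₂ hT N₁ N₂ hpos₂ hode₁ hode₂ hper₂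
end

section
/- Let ε₁, ε₂, γ₁, γ₂ > 0 and let N₁, N₂ : ℝ → ℝ be differentiable positive functions satisfying the Volterra predator-prey system N₁' = N₁(ε₁ − γ₁ N₂), N₂' = −N₂(ε₂ − γ₂ N₁), and suppose the solution is periodic with period T > 0. Then the time average of the predator over one period equals the equilibrium value: (1/T) ∫₀ᵀ N₂(t) dt = ε₁/γ₁. -/
/-! Along a solution, `log N₁` has derivative `ε₁ - γ₁ N₂`; integrating over a period, where `log N₁`
returns to its initial value, gives `ε₁ T - γ₁ ∫₀ᵀ N₂ = 0`. -/

open Real intervalIntegral MeasureTheory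

theorem integral_eq_log_sub_log_of_hasDerivAt_mul {f g : ℝ → ℝ} {a b : ℝ}
    (hf : ∀ t ∈ Set.uIcc a b, HasDerivAt f (f t * g t) t) (hf₀ : ∀ t ∈ Set.uIcc a b, f t ≠ 0)
    (hg : IntervalIntegrable g volume a b) :
    ∫ t in a..b, g t = log (f b) - log (f a) := by
  refine integral_eq_sub_of_hasDerivAt (f := fun t => log (f t)) (fun t ht => ?_) hg
  simpa [mul_div_cancel_left₀ _ (hf₀ t ht)] using (hf t ht).log (hf₀ t ht)

theorem integral_eq_zero_of_hasDerivAt_mul_of_periodic {f g : ℝ → ℝ} {a T : ℝ}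
    (hf : ∀ t, HasDerivAt f (f t * g t) t) (hf₀ : ∀ t, f t ≠ 0)
    (hg : IntervalIntegrable g volume a (a + T)) (hper : Function.Periodic f T) :
    ∫ t in a..a + T, g t = 0 := by
  rw [integral_eq_log_sub_log_of_hasDerivAt_mul (fun t _ => hf t) (fun t _ => hf₀ t) hg, hper,
    sub_self]

theorem volterra_predator_average_general (ε₁ ε₂ γ₁ γ₂ T : ℝ)
    (hγ₁ : 0 < γ₁) (hT : 0 < T)
    (N₁ N₂ : ℝ → ℝ) (hpos₁ : ∀ t, 0 < N₁ t)
    (hode₁ : ∀ t, HasDerivAt N₁ (N₁ t * (ε₁ - γ₁ * N₂ t)) t)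
    (hode₂ : ∀ t, HasDerivAt N₂ (-(N₂ t) * (ε₂ - γ₂ * N₁ t)) t)
    (hper₁ : ∀ t, N₁ (t + T) = N₁ t) :
    (1 / T) * ∫ t in (0 : ℝ)..T, N₂ t = ε₁ / γ₁ := by
  have hN₂ : Continuous N₂ := continuous_iff_continuousAt.2 fun t => (hode₂ t).continuousAt
  have hN₂int : IntervalIntegrable (fun t => γ₁ * N₂ t) volume 0 T :=
    (continuous_const.mul hN₂).intervalIntegrable 0 T
  have hperiod : ∫ t in (0 : ℝ)..T, (ε₁ - γ₁ * N₂ t) = 0 := by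
    simpa using integral_eq_zero_of_hasDerivAt_mul_of_periodic (a := 0) hode₁
      (fun t => (hpos₁ t).ne') (by simpa using intervalIntegrable_const.sub hN₂int) hper₁
  have hsplit : ∫ t in (0 : ℝ)..T, (ε₁ - γ₁ * N₂ t) = T * ε₁ - γ₁ * ∫ t in (0 : ℝ)..T, N₂ t := by
    rw [integral_sub intervalIntegrable_const hN₂int, intervalIntegral.integral_const_mul]
    simp
  field_simp
  linarith

/-- The time average of the predator over one period of a periodic solution of
the Volterra predator-prey system equals the equilibrium value ε₁/γ₁. -/
theorem volterra_predator_average (ε₁ ε₂ γ₁ γ₂ T : ℝ)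
    (hε₁ : 0 < ε₁) (hε₂ : 0 < ε₂) (hγ₁ : 0 < γ₁) (hγ₂ : 0 < γ₂) (hT : 0 < T)
    (N₁ N₂ : ℝ → ℝ) (hpos₁ : ∀ t, 0 < N₁ t) (hpos₂ : ∀ t, 0 < N₂ t)
    (hode₁ : ∀ t, HasDerivAt N₁ (N₁ t * (ε₁ - γ₁ * N₂ t)) t)
    (hode₂ : ∀ t, HasDerivAt N₂ (-(N₂ t) * (ε₂ - γ₂ * N₁ t)) t)
    (hper₁ : ∀ t, N₁ (t + T) = N₁ t) (hper₂ : ∀ t, N₂ (t + T) = N₂ t) :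
    (1 / T) * ∫ t in (0 : ℝ)..T, N₂ t = ε₁ / γ₁ :=
  volterra_predator_average_general ε₁ ε₂ γ₁ γ₂ T hγ₁ hT N₁ N₂ hpos₁ hode₁ hode₂ hper₁
end

section
/- Law of the disturbance of the averages (Volterra). Let ε₁, ε₂, γ₁, γ₂ > 0 and let α, β, λ > 0 with α λ < ε₁ (uniform harvesting removes α λ N₁ dt prey and β λ N₂ dt predators in time dt). Let N₁, N₂ be differentiable positive periodic (period T > 0) solutions of the harvested system N₁' = N₁(ε₁ − αλ − γ₁ N₂), N₂' = −N₂(ε₂ + βλ − γ₂ N₁). Then the period averages are (1/T)∫₀ᵀ N₁ = (ε₂ + βλ)/γ₂ and (1/T)∫₀ᵀ N₂ = (ε₁ − αλ)/γ₁; in particular, the average of the prey (ε₂ + βλ)/γ₂ is strictly greater than its unharvested value ε₂/γ₂, and the average of the predator (ε₁ − αλ)/γ₁ is strictly smaller than its unharvested value ε₁/γ₁. -/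
lemma volterra_aux (T : ℝ) (f g : ℝ → ℝ) (hfpos : ∀ t, 0 < f t)
    (hf : ∀ t, HasDerivAt f (f t * g t) t) (hg : Continuous g)
    (hper : f T = f 0) : ∫ t in (0 : ℝ)..T, g t = 0 := by
  have hL : ∀ t, HasDerivAt (fun s => Real.log (f s)) (g t) t := by
    intro t
    have := (hf t).log (hfpos t).ne'
    simpa [mul_div_assoc, mul_div_cancel_left₀ _ (hfpos t).ne'] using this
  have := intervalIntegral.integral_eq_sub_of_hasDerivAt
    (f := fun s => Real.log (f s)) (f' := g)
    (fun t _ => hL t) (hg.intervalIntegrable 0 T)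
  simp only [hper, sub_self] at this ⊢
  exact this

/-- Volterra's law of the disturbance of the averages: under uniform
harvesting at rates αλ (prey) and βλ (predators) with αλ < ε₁, the period
averages of a positive periodic solution of the harvested system are
(ε₂ + βλ)/γ₂ and (ε₁ − αλ)/γ₁; in particular the prey average increases and
the predator average decreases relative to the unharvested values. -/
theorem volterra_disturbance_of_averages (ε₁ ε₂ γ₁ γ₂ α β lam T : ℝ)
    (hε₁ : 0 < ε₁) (hε₂ : 0 < ε₂) (hγ₁ : 0 < γ₁) (hγ₂ : 0 < γ₂)
    (hα : 0 < α) (hβ : 0 < β) (hlam : 0 < lam) (hharv : α * lam < ε₁)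
    (hT : 0 < T)
    (N₁ N₂ : ℝ → ℝ) (hpos₁ : ∀ t, 0 < N₁ t) (hpos₂ : ∀ t, 0 < N₂ t)
    (hode₁ : ∀ t, HasDerivAt N₁ (N₁ t * (ε₁ - α * lam - γ₁ * N₂ t)) t)
    (hode₂ : ∀ t, HasDerivAt N₂ (-(N₂ t) * (ε₂ + β * lam - γ₂ * N₁ t)) t)
    (hper₁ : ∀ t, N₁ (t + T) = N₁ t) (hper₂ : ∀ t, N₂ (t + T) = N₂ t) :
    ((1 / T) * ∫ t in (0 : ℝ)..T, N₁ t = (ε₂ + β * lam) / γ₂) ∧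
    ((1 / T) * ∫ t in (0 : ℝ)..T, N₂ t = (ε₁ - α * lam) / γ₁) ∧
    ε₂ / γ₂ < (ε₂ + β * lam) / γ₂ ∧
    (ε₁ - α * lam) / γ₁ < ε₁ / γ₁ := by
  have hc₁ : Continuous N₁ := by
    rw [continuous_iff_continuousAt]
    exact fun t => (hode₁ t).continuousAt
  have hc₂ : Continuous N₂ := by
    rw [continuous_iff_continuousAt]
    exact fun t => (hode₂ t).continuousAt
  have key₁ : ∫ t in (0 : ℝ)..T, (ε₁ - α * lam - γ₁ * N₂ t) = 0 := by
    apply volterra_aux T N₁ _ hpos₁ hode₁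
      (by continuity)
    simpa using hper₁ 0
  have key₂ : ∫ t in (0 : ℝ)..T, (γ₂ * N₁ t - (ε₂ + β * lam)) = 0 := by
    apply volterra_aux T N₂ _ hpos₂ (fun t => by
      have := hode₂ t; convert this using 1; ring) (by continuity)
    simpa using hper₂ 0
  have int₁ : IntervalIntegrable N₁ MeasureTheory.volume 0 T :=
    hc₁.intervalIntegrable 0 T
  have int₂ : IntervalIntegrable N₂ MeasureTheory.volume 0 T :=
    hc₂.intervalIntegrable 0 T
  have e₁ : ∫ t in (0 : ℝ)..T, N₁ t = (ε₂ + β * lam) * T / γ₂ := by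
    have := key₂
    rw [intervalIntegral.integral_sub (int₁.const_mul _) (intervalIntegrable_const)] at this
    simp only [intervalIntegral.integral_const_mul, intervalIntegral.integral_const,
      smul_eq_mul, sub_zero] at this
    field_simp at this ⊢
    linarith
  have e₂ : ∫ t in (0 : ℝ)..T, N₂ t = (ε₁ - α * lam) * T / γ₁ := by
    have := key₁
    rw [intervalIntegral.integral_sub (intervalIntegrable_const) (int₂.const_mul _)] at this
    simp only [intervalIntegral.integral_const_mul, intervalIntegral.integral_const,
      smul_eq_mul, sub_zero] at this
    field_simp at this ⊢
    linarith
  refine ⟨?_, ?_, ?_, ?_⟩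
  · rw [e₁]; field_simp
  · rw [e₂]; field_simp
  · gcongr
    nlinarith [mul_pos hβ hlam]
  · gcongr
    nlinarith [mul_pos hα hlam]
end

section
/- Every nonconstant maximal solution of the Volterra predator-prey system with initial conditions in the open positive quadrant is periodic: if ε₁, ε₂, γ₁, γ₂ > 0 and (N₁, N₂) is a maximal solution with N₁(0) > 0, N₂(0) > 0 and (N₁(0), N₂(0)) ≠ (ε₂/γ₂, ε₁/γ₁), then the solution is defined for all t ∈ ℝ and there exists T > 0 with N₁(t+T) = N₁(t) and N₂(t+T) = N₂(t) for all t. (Volterra's law of the periodic cycle: the fluctuations of the two species are periodic.) -/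
/-!
In the coordinates `N₁ = (ε₂/γ₂) eᵖ`, `N₂ = (ε₁/γ₁) e^q` the system becomes
`p' = -ε₁ (e^q - 1)`, `q' = ε₂ (eᵖ - 1)`, which conserves the energy
`E = ε₂ (eᵖ - 1 - p) + ε₁ (e^q - 1 - q)`; its sublevel sets are compact. Multiplying the field by a
smooth cutoff of `E` gives a compactly supported field, whose solutions exist for all time and
still conserve `E`, hence never leave the region where the cutoff is `1`.

Since `p'` has the sign of `-q` and `q'` the sign of `p`, a solution other than the equilibrium
`0` passes through the four quadrants in finite time, so it meets the positive `q`-axis at two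
times `a < b`. The energy is injective on that half-axis, so the solution takes the same value at
`a` and `b`, and uniqueness makes it `(b - a)`-periodic. Uniqueness for the original system on `s`
identifies the global solution with the given one.
-/

open Set Filter Topology

section ODE

theorem HasDerivAt.fst {F G : Type*} [NormedAddCommGroup F] [NormedSpace ℝ F]
    [NormedAddCommGroup G] [NormedSpace ℝ G] {f : ℝ → F × G} {f' : F × G} {t : ℝ}
    (h : HasDerivAt f f' t) : HasDerivAt (fun t ↦ (f t).1) f'.1 t :=
  (hasFDerivAt_fst (𝕜 := ℝ) (p := f t)).comp_hasDerivAt t h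

theorem HasDerivAt.snd {F G : Type*} [NormedAddCommGroup F] [NormedSpace ℝ F]
    [NormedAddCommGroup G] [NormedSpace ℝ G] {f : ℝ → F × G} {f' : F × G} {t : ℝ}
    (h : HasDerivAt f f' t) : HasDerivAt (fun t ↦ (f t).2) f'.2 t :=
  (hasFDerivAt_snd (𝕜 := ℝ) (p := f t)).comp_hasDerivAt t h

variable {E : Type*} [NormedAddCommGroup E] [NormedSpace ℝ E] {v : E → E}

theorem isIntegralCurveOn_eqOn_of_locallyLipschitz (hv : LocallyLipschitz v) {s : Set ℝ}
    (hs : IsOpen s) (hs' : IsPreconnected s) {f g : ℝ → E}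
    (hf : IsIntegralCurveOn f (fun _ ↦ v) s) (hg : IsIntegralCurveOn g (fun _ ↦ v) s)
    {t₀ : ℝ} (ht₀ : t₀ ∈ s) (h : f t₀ = g t₀) : EqOn f g s := by
  have hf' : ∀ t ∈ s, HasDerivAt f (v (f t)) t := fun t ht ↦
    (hf.isIntegralCurveAt (hs.mem_nhds ht)).hasDerivAt
  have hg' : ∀ t ∈ s, HasDerivAt g (v (g t)) t := fun t ht ↦
    (hg.isIntegralCurveAt (hs.mem_nhds ht)).hasDerivAt
  have hcover : s ⊆ {t | f =ᶠ[𝓝 t] g} ∪ {t | ∀ᶠ t' in 𝓝 t, f t' ≠ g t'} := by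
    intro t ht
    by_cases heq : f t = g t
    · left
      obtain ⟨K, U, hU, hK⟩ := hv (f t)
      have hsol : ∀ {k : ℝ → E}, (∀ t ∈ s, HasDerivAt k (v (k t)) t) → k t = f t →
          ∀ᶠ t' in 𝓝 t, HasDerivAt k (v (k t')) t' ∧ k t' ∈ U := fun hk hkt ↦
        (eventually_mem_nhds_iff.2 (hs.mem_nhds ht)).mono (fun t' ht' ↦ hk t' (mem_of_mem_nhds ht'))
          |>.and ((hk t ht).continuousAt.eventually_mem (hkt ▸ hU))
      exact ODE_solution_unique_of_eventually (v := fun _ ↦ v) (s := fun _ ↦ U)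
        (.of_forall fun _ ↦ hK) (hsol hf' rfl) (hsol hg' heq.symm) heq
    · right
      exact ((hf' t ht).continuousAt.prodMk (hg' t ht).continuousAt).eventually
        (isOpen_ne_fun continuous_fst continuous_snd |>.mem_nhds heq)
  by_contra hne
  obtain ⟨t₁, ht₁, hne₁⟩ : ∃ t₁ ∈ s, f t₁ ≠ g t₁ := by simpa [EqOn] using hne
  have hU₀ : f =ᶠ[𝓝 t₀] g :=
    (hcover ht₀).resolve_right fun hW ↦ hW.self_of_nhds h
  have hW₁ : ∀ᶠ t' in 𝓝 t₁, f t' ≠ g t' :=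
    (hcover ht₁).resolve_left fun hU ↦ hne₁ hU.eq_of_nhds
  obtain ⟨t, -, hU, hW⟩ := hs' _ _ isOpen_setOfPred_eventually_nhds
    isOpen_setOfPred_eventually_nhds hcover ⟨t₀, ht₀, hU₀⟩ ⟨t₁, ht₁, hW₁⟩
  exact (hU.and hW).exists.elim fun _ h ↦ h.2 h.1

theorem IsIntegralCurve.periodic_of_eq_of_locallyLipschitz (hv : LocallyLipschitz v)
    {γ : ℝ → E} (hγ : IsIntegralCurve γ (fun _ ↦ v)) {a b : ℝ} (h : γ a = γ b) :
    Function.Periodic γ (a - b) := by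
  intro t
  simpa using isIntegralCurveOn_eqOn_of_locallyLipschitz hv isOpen_univ isPreconnected_univ
    ((hγ.comp_add (a - b)).isIntegralCurveOn univ) (hγ.isIntegralCurveOn univ) (t₀ := b)
    trivial (by simp [h]) (mem_univ t)

theorem exists_isIntegralCurve_of_contDiff_of_hasCompactSupport [CompleteSpace E]
    (hv : ContDiff ℝ 1 v) (hsupp : HasCompactSupport v) (x₀ : E) :
    ∃ γ : ℝ → E, γ 0 = x₀ ∧ IsIntegralCurve γ (fun _ ↦ v) := by
  obtain ⟨K, hK⟩ := hv.lipschitzWith_of_hasCompactSupport hsupp one_ne_zero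
  obtain ⟨C, hC⟩ := hv.continuous.bounded_above_of_compact_support hsupp
  have hlocal : ∀ T : ℝ, ∃ α : ℝ → E, α 0 = x₀ ∧
      IsIntegralCurveOn α (fun _ ↦ v) (Ioo (-T) T) := by
    intro T
    have hPL : IsPicardLindelof (fun _ ↦ v) (⟨0, by simp, by simp⟩ : Icc (-|T|) |T|) x₀
        (C.toNNReal * |T|).toNNReal 0 C.toNNReal K :=
      { lipschitzOnWith := fun _ _ ↦ hK.lipschitzOnWith
        continuousOn := fun _ _ ↦ continuousOn_const
        norm_le := fun _ _ x _ ↦ (hC x).trans (Real.le_coe_toNNReal C)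
        mul_max_le := by simp }
    obtain ⟨α, hα0, hα⟩ := hPL.exists_eq_forall_mem_Icc_hasDerivWithinAt₀
    refine ⟨α, hα0, fun t ht ↦ ?_⟩
    have ht' : t ∈ Ioo (-|T|) |T| :=
      ⟨by linarith [ht.1, le_abs_self T], by linarith [ht.2, le_abs_self T]⟩
    exact ((hα t (Ioo_subset_Icc_self ht')).hasDerivAt (Icc_mem_nhds ht'.1 ht'.2)).hasDerivWithinAt
  choose α hα0 hα using hlocal
  have hmono : ∀ {T T' : ℝ}, 0 < T → T ≤ T' → EqOn (α T) (α T') (Ioo (-T) T) :=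
    fun {T T'} hT hTT' ↦ isIntegralCurveOn_eqOn_of_locallyLipschitz hK.locallyLipschitz
      isOpen_Ioo isPreconnected_Ioo (hα T) ((hα T').mono (Ioo_subset_Ioo (by linarith) hTT'))
      (t₀ := 0) ⟨by linarith, hT⟩ (by rw [hα0, hα0])
  have habs : ∀ t : ℝ, t ∈ Ioo (-(|t| + 1)) (|t| + 1) := fun t ↦ by
    rw [mem_Ioo, ← abs_lt]
    exact lt_add_one _
  have hext : ∀ T, EqOn (fun t ↦ α (|t| + 1) t) (α T) (Ioo (-T) T) := by
    intro T t ht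
    rcases le_total (|t| + 1) T with hle | hle
    · exact hmono (by positivity) hle (habs t)
    · exact (hmono (by linarith [ht.1, ht.2]) hle ht).symm
  refine ⟨fun t ↦ α (|t| + 1) t, hα0 _, fun t ↦ ?_⟩
  have hnhds := Ioo_mem_nhds (habs t).1 (habs t).2
  exact ((hα _).isIntegralCurveAt hnhds).hasDerivAt.congr_of_eventuallyEq
    (eventuallyEq_of_mem hnhds (hext _))

end ODE

section Rotation

variable {f g p q : ℝ → ℝ}

theorem exists_first_zero {φ : ℝ → ℝ} {a b : ℝ} (hab : a ≤ b) (hφ : ContinuousOn φ (Icc a b))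
    (ha : 0 < φ a) (hb : φ b ≤ 0) : ∃ c ∈ Ioc a b, φ c = 0 ∧ ∀ t ∈ Ico a c, 0 < φ t := by
  set S := {t ∈ Icc a b | φ t ≤ 0}
  have hS : IsClosed S := hφ.preimage_isClosed_of_isClosed isClosed_Icc isClosed_Iic
  have hbdd : BddBelow S := ⟨a, fun t ht ↦ ht.1.1⟩
  have hcS : sInf S ∈ S := hS.csInf_mem ⟨b, ⟨hab, le_rfl⟩, hb⟩ hbdd
  have hpos : ∀ t ∈ Ico a (sInf S), 0 < φ t := fun t ht ↦ by
    by_contra! h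
    exact (csInf_le hbdd ⟨⟨ht.1, ht.2.le.trans hcS.1.2⟩, h⟩).not_gt ht.2
  have hac : a < sInf S := hcS.1.1.lt_of_ne fun h ↦ (h ▸ ha).not_ge hcS.2
  refine ⟨sInf S, ⟨hac, hcS.1.2⟩, hcS.2.antisymm (not_lt.1 fun hneg ↦ ?_), hpos⟩
  obtain ⟨t, ht, ht0⟩ := intermediate_value_Ioo' hac.le (hφ.mono (Icc_subset_Icc_right hcS.1.2))
    ⟨hneg, ha⟩
  exact (hpos t ⟨ht.1.le, ht.2⟩).ne' ht0

theorem StrictMono.neg_comp_neg (hg : StrictMono g) : StrictMono fun x ↦ -g (-x) :=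
  fun _ _ hxy ↦ neg_lt_neg (hg (neg_lt_neg hxy))

/-- For increasing `f` and `g` vanishing at `0`, these curves wind counterclockwise around the
origin of the `(p, q)`-plane. -/
def IsRotationCurve (f g p q : ℝ → ℝ) : Prop :=
  ∀ t, HasDerivAt p (-f (q t)) t ∧ HasDerivAt q (g (p t)) t

theorem IsRotationCurve.rotate (h : IsRotationCurve f g p q) :
    IsRotationCurve (fun x ↦ -g (-x)) f q (fun t ↦ -p t) :=
  fun t ↦ ⟨by simpa using (h t).2, by simpa using (h t).1.fun_neg⟩

theorem IsRotationCurve.exists_quarter_turn (h : IsRotationCurve f g p q) (hf : StrictMono f)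
    (hf0 : f 0 = 0) (hg : StrictMono g) (hg0 : g 0 = 0) {t₀ : ℝ} (hp : 0 < p t₀)
    (hq : 0 ≤ q t₀) : ∃ t₁ > t₀, p t₁ = 0 ∧ 0 < q t₁ := by
  have hpc : Continuous p := continuous_iff_continuousAt.2 fun t ↦ (h t).1.continuousAt
  have hqc : Continuous q := continuous_iff_continuousAt.2 fun t ↦ (h t).2.continuousAt
  have hq_mono : ∀ {t₁}, (∀ t ∈ Ico t₀ t₁, 0 < p t) → StrictMonoOn q (Icc t₀ t₁) :=
    fun hpos ↦ strictMonoOn_of_deriv_pos (convex_Icc _ _) hqc.continuousOn fun t ht ↦ by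
      rw [interior_Icc] at ht
      rw [(h t).2.deriv, ← hg0]
      exact hg (hpos t ⟨ht.1.le, ht.2⟩)
  obtain ⟨t₂, ht₂, hp₂⟩ : ∃ t₂ ≥ t₀, p t₂ ≤ 0 := by
    -- Otherwise `q` increases, so `p' ≤ -f (q (t₀ + 1)) < 0` after `t₀ + 1`.
    by_contra! hpos
    have hq_le : ∀ {t₁ t₂}, t₀ ≤ t₁ → t₁ ≤ t₂ → q t₁ ≤ q t₂ := fun h₁ h₂ ↦
      (hq_mono fun t ht ↦ hpos t ht.1).monotoneOn ⟨h₁, h₂⟩ ⟨h₁.trans h₂, le_rfl⟩ h₂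
    set s := t₀ + 1
    set c := f (q s)
    have hc : 0 < c := hf0 ▸ hf (hq.trans_lt (hq_mono (fun t ht ↦ hpos t ht.1)
      ⟨le_rfl, by linarith⟩ ⟨by linarith, le_rfl⟩ (by linarith)))
    have hτ : 0 ≤ p s / c := div_nonneg (hpos s (by linarith)).le hc.le
    have hdecay : p (s + p s / c) - p s ≤ -c * (s + p s / c - s) :=
      (convex_Ici s).image_sub_le_mul_sub_of_deriv_le hpc.continuousOn
        (fun t _ ↦ (h t).1.differentiableAt.differentiableWithinAt) (fun t ht ↦ by
          rw [interior_Ici] at ht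
          rw [(h t).1.deriv, neg_le_neg_iff]
          exact hf.monotone (hq_le (by linarith) ht.le))
        s self_mem_Ici _ (le_add_of_nonneg_right hτ) (le_add_of_nonneg_right hτ)
    rw [add_sub_cancel_left, neg_mul, mul_div_cancel₀ _ hc.ne'] at hdecay
    linarith [hpos (s + p s / c) (by linarith)]
  obtain ⟨t₁, ht₁, hp₁, hpos⟩ := exists_first_zero ht₂ hpc.continuousOn hp hp₂
  exact ⟨t₁, ht₁.1, hp₁,
    hq.trans_lt (hq_mono hpos ⟨le_rfl, ht₁.1.le⟩ ⟨ht₁.1.le, le_rfl⟩ ht₁.1)⟩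

theorem IsRotationCurve.exists_gt_on_positive_axis (h : IsRotationCurve f g p q)
    (hf : StrictMono f) (hf0 : f 0 = 0) (hg : StrictMono g) (hg0 : g 0 = 0) {t₀ : ℝ}
    (hne : (p t₀, q t₀) ≠ 0) : ∃ t₁ > t₀, p t₁ = 0 ∧ 0 < q t₁ := by
  have NE := fun {t} ↦ h.exists_quarter_turn hf hf0 hg hg0 (t₀ := t)
  have NW := fun {t} ↦ h.rotate.exists_quarter_turn hg.neg_comp_neg (by simp [hg0]) hf hf0
    (t₀ := t)
  have SW := fun {t} ↦ h.rotate.rotate.exists_quarter_turn hf.neg_comp_neg (by simp [hf0])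
    hg.neg_comp_neg (by simp [hg0]) (t₀ := t)
  have SE := fun {t} ↦ h.rotate.rotate.rotate.exists_quarter_turn hg.neg_comp_neg.neg_comp_neg
    (by simp [hg0]) hf.neg_comp_neg (by simp [hf0]) (t₀ := t)
  simp only [neg_neg, neg_pos, neg_nonneg, neg_eq_zero] at NW SW SE
  have fromSE : ∀ {t}, 0 ≤ p t → q t < 0 → ∃ t₁ > t, p t₁ = 0 ∧ 0 < q t₁ := by
    intro t hp hq
    obtain ⟨t', ht', hq', hp'⟩ := SE hq hp
    obtain ⟨t'', ht'', H⟩ := NE hp' hq'.ge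
    exact ⟨t'', ht'.trans ht'', H⟩
  have fromSW : ∀ {t}, p t < 0 → q t ≤ 0 → ∃ t₁ > t, p t₁ = 0 ∧ 0 < q t₁ := by
    intro t hp hq
    obtain ⟨t', ht', hp', hq'⟩ := SW hp hq
    obtain ⟨t'', ht'', H⟩ := fromSE hp'.ge hq'
    exact ⟨t'', ht'.trans ht'', H⟩
  have fromNW : ∀ {t}, p t ≤ 0 → 0 < q t → ∃ t₁ > t, p t₁ = 0 ∧ 0 < q t₁ := by
    intro t hp hq
    obtain ⟨t', ht', hq', hp'⟩ := NW hq hp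
    obtain ⟨t'', ht'', H⟩ := fromSW hp' hq'.le
    exact ⟨t'', ht'.trans ht'', H⟩
  rcases lt_trichotomy (p t₀) 0 with hp | hp | hp <;>
    rcases lt_trichotomy (q t₀) 0 with hq | hq | hq
  · exact fromSW hp hq.le
  · exact fromSW hp hq.le
  · exact fromNW hp.le hq
  · exact fromSE hp.ge hq
  · exact absurd (Prod.ext hp hq) hne
  · exact fromNW hp.le hq
  · exact fromSE hp.le hq
  · exact NE hp hq.ge
  · exact NE hp hq.le

end Rotation

namespace Real

theorem abs_sub_one_le_exp_sub_one_sub (y : ℝ) : |y| - 1 ≤ exp y - 1 - y := by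
  rcases le_total 0 y with hy | hy
  · nlinarith [abs_of_nonneg hy, quadratic_le_exp_of_nonneg hy]
  · nlinarith [abs_of_nonpos hy, exp_pos y]

theorem strictMonoOn_exp_sub_one_sub : StrictMonoOn (fun y ↦ exp y - 1 - y) (Ici 0) := by
  intro a ha b _ hab
  have h₁ : b - a < exp (b - a) - 1 := by linarith [add_one_lt_exp (sub_pos.2 hab).ne']
  have h₂ : 1 ≤ exp a := one_le_exp ha
  have h₃ : exp b = exp a * exp (b - a) := by rw [← exp_add, add_sub_cancel]
  show exp a - 1 - a < exp b - 1 - b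
  nlinarith

end Real

namespace Volterra

open Real

noncomputable section

variable {ε₁ ε₂ γ₁ γ₂ : ℝ}

def field (ε₁ ε₂ γ₁ γ₂ : ℝ) (x : ℝ × ℝ) : ℝ × ℝ :=
  (x.1 * (ε₁ - γ₁ * x.2), -x.2 * (ε₂ - γ₂ * x.1))

def ofLog (ε₁ ε₂ γ₁ γ₂ : ℝ) (y : ℝ × ℝ) : ℝ × ℝ :=
  (ε₂ / γ₂ * exp y.1, ε₁ / γ₁ * exp y.2)

/-- `field` in the coordinates `x = ofLog y`, which put the equilibrium at `y = 0`. -/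
def logField (ε₁ ε₂ : ℝ) (y : ℝ × ℝ) : ℝ × ℝ :=
  (-(ε₁ * (exp y.2 - 1)), ε₂ * (exp y.1 - 1))

def energy (ε₁ ε₂ : ℝ) (y : ℝ × ℝ) : ℝ :=
  ε₂ * (exp y.1 - 1 - y.1) + ε₁ * (exp y.2 - 1 - y.2)

theorem contDiff_field : ContDiff ℝ 1 (field ε₁ ε₂ γ₁ γ₂) := by
  unfold field; fun_prop

theorem contDiff_logField : ContDiff ℝ 1 (logField ε₁ ε₂) := by
  unfold logField; fun_prop

theorem contDiff_energy : ContDiff ℝ 1 (energy ε₁ ε₂) := by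
  unfold energy; fun_prop

theorem ofLog_zero : ofLog ε₁ ε₂ γ₁ γ₂ 0 = (ε₂ / γ₂, ε₁ / γ₁) := by
  simp [ofLog]

theorem exists_ofLog_eq (hε₁ : 0 < ε₁) (hε₂ : 0 < ε₂) (hγ₁ : 0 < γ₁) (hγ₂ : 0 < γ₂)
    {x : ℝ × ℝ} (h₁ : 0 < x.1) (h₂ : 0 < x.2) : ∃ y, ofLog ε₁ ε₂ γ₁ γ₂ y = x := by
  refine ⟨(log (x.1 / (ε₂ / γ₂)), log (x.2 / (ε₁ / γ₁))), ?_⟩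
  have hp₁ : 0 < x.1 / (ε₂ / γ₂) := by positivity
  have hp₂ : 0 < x.2 / (ε₁ / γ₁) := by positivity
  ext <;> simp only [ofLog, exp_log hp₁, exp_log hp₂] <;> field_simp

theorem isIntegralCurve_field_ofLog (hγ₁ : γ₁ ≠ 0) (hγ₂ : γ₂ ≠ 0) {z : ℝ → ℝ × ℝ}
    (hz : IsIntegralCurve z (fun _ ↦ logField ε₁ ε₂)) :
    IsIntegralCurve (fun t ↦ ofLog ε₁ ε₂ γ₁ γ₂ (z t)) (fun _ ↦ field ε₁ ε₂ γ₁ γ₂) := by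
  intro t
  refine (((hz t).fst.exp.const_mul (ε₂ / γ₂)).prodMk
    ((hz t).snd.exp.const_mul (ε₁ / γ₁))).congr_deriv ?_
  simp only [logField, field, ofLog]
  congr 1 <;> field_simp <;> ring

theorem norm_le_of_energy_le (hε₁ : 0 < ε₁) (hε₂ : 0 < ε₂) {y : ℝ × ℝ} {c : ℝ}
    (h : energy ε₁ ε₂ y ≤ c) : ‖y‖ ≤ c / ε₁ + c / ε₂ + 1 := by
  have h₁ := abs_sub_one_le_exp_sub_one_sub y.1
  have h₂ := abs_sub_one_le_exp_sub_one_sub y.2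
  have h₁' := add_one_le_exp y.1
  have h₂' := add_one_le_exp y.2
  unfold energy at h
  have hc₁ : |y.1| ≤ c / ε₂ + 1 := by
    rw [← sub_le_iff_le_add, le_div_iff₀ hε₂]; nlinarith
  have hc₂ : |y.2| ≤ c / ε₁ + 1 := by
    rw [← sub_le_iff_le_add, le_div_iff₀ hε₁]; nlinarith
  have hc : 0 ≤ c := by nlinarith
  have : 0 ≤ c / ε₁ := div_nonneg hc hε₁.le
  have : 0 ≤ c / ε₂ := div_nonneg hc hε₂.le
  rw [Prod.norm_def, Real.norm_eq_abs, Real.norm_eq_abs]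
  exact max_le (by linarith) (by linarith)

theorem energy_eq_of_hasDerivAt_smul_logField {z : ℝ → ℝ × ℝ} {a : ℝ → ℝ}
    (hz : ∀ t, HasDerivAt z (a t • logField ε₁ ε₂ (z t)) t) (t : ℝ) :
    energy ε₁ ε₂ (z t) = energy ε₁ ε₂ (z 0) := by
  have hderiv : ∀ t, HasDerivAt (fun t ↦ energy ε₁ ε₂ (z t)) 0 t := by
    intro t
    have h₁ := (hz t).fst
    have h₂ := (hz t).snd
    simp only [logField, Prod.smul_mk, smul_eq_mul] at h₁ h₂
    refine ((((h₁.exp.sub_const 1).fun_sub h₁).const_mul ε₂).fun_add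
      (((h₂.exp.sub_const 1).fun_sub h₂).const_mul ε₁)).congr_deriv ?_
    ring
  exact is_const_of_deriv_eq_zero (fun t ↦ (hderiv t).differentiableAt)
    (fun t ↦ (hderiv t).deriv) t 0

theorem energy_injOn_axis (hε₁ : 0 < ε₁) : InjOn (energy ε₁ ε₂) {y | y.1 = 0 ∧ 0 < y.2} := by
  rintro ⟨_, a⟩ ⟨rfl, ha⟩ ⟨_, b⟩ ⟨rfl, hb⟩ h
  simp only [energy, exp_zero, sub_self, mul_zero, zero_add] at h
  exact Prod.ext rfl
    (strictMonoOn_exp_sub_one_sub.injOn ha.le hb.le (mul_left_cancel₀ hε₁.ne' h))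

theorem exists_isIntegralCurve_logField (hε₁ : 0 < ε₁) (hε₂ : 0 < ε₂) (y₀ : ℝ × ℝ) :
    ∃ z : ℝ → ℝ × ℝ, z 0 = y₀ ∧ IsIntegralCurve z (fun _ ↦ logField ε₁ ε₂) := by
  set c := energy ε₁ ε₂ y₀
  set cutoff : ℝ × ℝ → ℝ := fun y ↦ smoothTransition (c + 1 - energy ε₁ ε₂ y)
  have hw : ContDiff ℝ 1 fun y ↦ cutoff y • logField ε₁ ε₂ y :=
    (smoothTransition.contDiff.comp (contDiff_const.sub contDiff_energy)).smul contDiff_logField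
  have hsupp : HasCompactSupport fun y ↦ cutoff y • logField ε₁ ε₂ y := by
    refine .intro (isCompact_closedBall 0 ((c + 1) / ε₁ + (c + 1) / ε₂ + 1)) fun y hy ↦ ?_
    have : c + 1 ≤ energy ε₁ ε₂ y := by
      by_contra! h
      exact hy (mem_closedBall_zero_iff.2 (norm_le_of_energy_le hε₁ hε₂ h.le))
    simp [cutoff, smoothTransition.zero_of_nonpos (sub_nonpos.2 this)]
  obtain ⟨z, hz0, hz⟩ := exists_isIntegralCurve_of_contDiff_of_hasCompactSupport hw hsupp y₀
  -- The cut-off field still conserves the energy, so `z` stays where the cutoff is `1`.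
  have hcut : ∀ t, cutoff (z t) = 1 := fun t ↦ by
    simp [cutoff, energy_eq_of_hasDerivAt_smul_logField hz t, hz0, c]
  exact ⟨z, hz0, fun t ↦ by simpa [hcut t] using hz t⟩

theorem isRotationCurve_of_isIntegralCurve_logField {z : ℝ → ℝ × ℝ}
    (hz : IsIntegralCurve z (fun _ ↦ logField ε₁ ε₂)) :
    IsRotationCurve (fun x ↦ ε₁ * (exp x - 1)) (fun x ↦ ε₂ * (exp x - 1))
      (fun t ↦ (z t).1) (fun t ↦ (z t).2) :=
  fun t ↦ ⟨(hz t).fst, (hz t).snd⟩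

theorem exists_periodic_of_isIntegralCurve_logField (hε₁ : 0 < ε₁) (hε₂ : 0 < ε₂)
    {z : ℝ → ℝ × ℝ} (hz : IsIntegralCurve z (fun _ ↦ logField ε₁ ε₂)) (hz0 : z 0 ≠ 0) :
    ∃ T > 0, Function.Periodic z T := by
  have hexp : ∀ {ε : ℝ}, 0 < ε → StrictMono fun x ↦ ε * (exp x - 1) := fun hε _ _ hxy ↦
    mul_lt_mul_of_pos_left (sub_lt_sub_right (exp_lt_exp.2 hxy) 1) hε
  have hrot := isRotationCurve_of_isIntegralCurve_logField hz
  obtain ⟨a, ha, ha₁, ha₂⟩ := hrot.exists_gt_on_positive_axis (hexp hε₁) (by simp) (hexp hε₂)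
    (by simp) (t₀ := 0) hz0
  obtain ⟨b, hb, hb₁, hb₂⟩ := hrot.exists_gt_on_positive_axis (hexp hε₁) (by simp) (hexp hε₂)
    (by simp) (t₀ := a) (by simp [ha₁, ha₂.ne'])
  have hconst := energy_eq_of_hasDerivAt_smul_logField (a := 1) (fun t ↦ by simpa using hz t)
  have hab : z b = z a :=
    energy_injOn_axis hε₁ ⟨hb₁, hb₂⟩ ⟨ha₁, ha₂⟩ (by rw [hconst a, hconst b])
  exact ⟨b - a, sub_pos.2 hb,
    hz.periodic_of_eq_of_locallyLipschitz contDiff_logField.locallyLipschitz hab⟩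

end

end Volterra

open Volterra

/-- Volterra's law of the periodic cycle: every nonconstant maximal solution
of the predator-prey system starting in the open positive quadrant is defined
for all time and is periodic. Formally: any solution defined on an open
connected set containing 0, with positive non-equilibrium initial data,
extends to a solution defined on all of ℝ which is periodic. -/
theorem volterra_periodic_cycle (ε₁ ε₂ γ₁ γ₂ : ℝ)
    (hε₁ : 0 < ε₁) (hε₂ : 0 < ε₂) (hγ₁ : 0 < γ₁) (hγ₂ : 0 < γ₂)
    (s : Set ℝ) (hs : IsOpen s) (hconn : IsConnected s) (h0s : (0 : ℝ) ∈ s)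
    (N₁ N₂ : ℝ → ℝ)
    (hode₁ : ∀ t ∈ s, HasDerivAt N₁ (N₁ t * (ε₁ - γ₁ * N₂ t)) t)
    (hode₂ : ∀ t ∈ s, HasDerivAt N₂ (-(N₂ t) * (ε₂ - γ₂ * N₁ t)) t)
    (h1 : 0 < N₁ 0) (h2 : 0 < N₂ 0)
    (hneq : (N₁ 0, N₂ 0) ≠ (ε₂ / γ₂, ε₁ / γ₁)) :
    ∃ M₁ M₂ : ℝ → ℝ,
      (∀ t ∈ s, M₁ t = N₁ t ∧ M₂ t = N₂ t) ∧
      (∀ t, HasDerivAt M₁ (M₁ t * (ε₁ - γ₁ * M₂ t)) t) ∧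
      (∀ t, HasDerivAt M₂ (-(M₂ t) * (ε₂ - γ₂ * M₁ t)) t) ∧
      ∃ T > 0, ∀ t, M₁ (t + T) = M₁ t ∧ M₂ (t + T) = M₂ t := by
  obtain ⟨y₀, hy₀⟩ := exists_ofLog_eq hε₁ hε₂ hγ₁ hγ₂ (x := (N₁ 0, N₂ 0)) h1 h2
  obtain ⟨z, hz0, hz⟩ := exists_isIntegralCurve_logField hε₁ hε₂ y₀
  obtain ⟨T, hT, hper⟩ := exists_periodic_of_isIntegralCurve_logField hε₁ hε₂ hz
    fun h ↦ hneq (by rw [← hy₀, ← hz0, h, ofLog_zero])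
  set M := fun t ↦ ofLog ε₁ ε₂ γ₁ γ₂ (z t)
  have hM := isIntegralCurve_field_ofLog hγ₁.ne' hγ₂.ne' hz
  have hMN : EqOn M (fun t ↦ (N₁ t, N₂ t)) s :=
    isIntegralCurveOn_eqOn_of_locallyLipschitz contDiff_field.locallyLipschitz hs
      hconn.isPreconnected (hM.isIntegralCurveOn s)
      (fun t ht ↦ ((hode₁ t ht).prodMk (hode₂ t ht)).hasDerivWithinAt) h0s
      (by simp [M, hz0, hy₀])
  exact ⟨fun t ↦ (M t).1, fun t ↦ (M t).2, fun t ht ↦ Prod.ext_iff.1 (hMN ht),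
    fun t ↦ (hM t).fst, fun t ↦ (hM t).snd, T, hT, fun t ↦ by simp [M, hper t]⟩
end
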